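/- Let U be a mould with U^0 = 0 satisfying additivity U^{r+s}(ω·η) = U^r(ω) + U^s(η) for concatenation of nonempty sequences, and U^m(ω) ≠ 0 for all nonempty ω. Suppose moulds A (with A^0 = 0) and S (with S^0 = 1) satisfy U · S = A × S, where (U · M)^m(ω) := U^m(ω) M^m(ω) componentwise and × is the mould product. Then A is alternal if and only if S is symmetral. -/
import Mathlib

open scoped BigOperators

/-- All shuffle interleavings of two lists, preserving the relative order of each. -/
def shuffles {α : Type*} : List α → List α → List (List α)
  | [], ys => [ys]
  | xs, [] => [xs]
  | x :: xs, y :: ys =>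
      ((shuffles xs (y :: ys)).map (x :: ·)) ++ ((shuffles (x :: xs) ys).map (y :: ·))
termination_by xs ys => xs.length + ys.length
decreasing_by all_goals (simp; try omega)

variable {K : Type*} [Field K]

/-- The shuffle sum of a mould `M` over all interleavings of `a` and `b`. -/
def shSum (M : List K → K) (a b : List K) : K := ((shuffles a b).map M).sum

/-- The mould (concatenation-deconcatenation) product. -/
def mmul (M N : List K → K) (w : List K) : K :=
  ∑ k ∈ Finset.range (w.length + 1), M (w.take k) * N (w.drop k)

/-- The unit mould: `1` in length `0` and `0` otherwise. -/
def one : List K → K := fun l => match l with | [] => 1 | _ => 0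

lemma shuffles_nil_left {α : Type*} (l : List α) : shuffles [] l = [l] := by simp [shuffles]

lemma shuffles_nil_right {α : Type*} (l : List α) : shuffles l [] = [l] := by
  cases l <;> simp [shuffles]

lemma shuffles_cons_cons {α : Type*} (x y : α) (xs ys : List α) :
    shuffles (x::xs) (y::ys)
      = ((shuffles xs (y :: ys)).map (x :: ·)) ++ ((shuffles (x :: xs) ys).map (y :: ·)) := by
  simp [shuffles]

lemma perm_of_mem_shuffles {α : Type*} {w a b : List α} (h : w ∈ shuffles a b) :
    w.Perm (a ++ b) := by
  induction a, b using shuffles.induct generalizing w with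
  | case1 b => rw [shuffles_nil_left] at h; simp at h; simp [h]
  | case2 a h' => rw [shuffles_nil_right] at h; simp at h; simp [h]
  | case3 x xs y ys ih1 ih2 =>
    rw [shuffles_cons_cons, List.mem_append] at h
    rcases h with h | h
    · obtain ⟨v, hv, rfl⟩ := List.mem_map.mp h
      exact (ih1 hv).cons x
    · obtain ⟨v, hv, rfl⟩ := List.mem_map.mp h
      refine ((ih2 hv).cons y).trans ?_
      exact (List.perm_middle).symm.trans (by simp)

lemma shSum_nil_left (M : List K → K) (l : List K) : shSum M [] l = M l := by
  simp [shSum, shuffles_nil_left]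

lemma shSum_nil_right (M : List K → K) (l : List K) : shSum M l [] = M l := by
  simp [shSum, shuffles_nil_right]

lemma shSum_cons_cons (M : List K → K) (x y : K) (xs ys : List K) :
    shSum M (x::xs) (y::ys)
      = shSum (fun l => M (x::l)) xs (y::ys) + shSum (fun l => M (y::l)) (x::xs) ys := by
  simp [shSum, shuffles_cons_cons, Function.comp_def]

lemma mmul_cons (M N : List K → K) (x : K) (w : List K) :
    mmul M N (x::w) = M [] * N (x::w) + mmul (fun l => M (x::l)) N w := by
  simp [mmul, Finset.sum_range_succ']
  ring

/-- Key combinatorial identity: summing the mould product over all shuffles equals the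
double sum over deconcatenations of each factor. -/
lemma key (M N : List K → K) (a b : List K) :
    ((shuffles a b).map (mmul M N)).sum =
      ∑ i ∈ Finset.range (a.length+1), ∑ j ∈ Finset.range (b.length+1),
        shSum M (a.take i) (b.take j) * shSum N (a.drop i) (b.drop j) := by
  induction a, b using shuffles.induct generalizing M N with
  | case1 b => simp [shuffles_nil_left, shSum_nil_left, mmul]
  | case2 a h => simp [shuffles_nil_right, shSum_nil_right, mmul]
  | case3 x xs y ys ih1 ih2 =>
    have expand : ((shuffles (x::xs) (y::ys)).map (mmul M N)).sum
        = M [] * shSum N (x::xs) (y::ys)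
          + ((shuffles xs (y::ys)).map (mmul (fun l => M (x::l)) N)).sum
          + ((shuffles (x::xs) ys).map (mmul (fun l => M (y::l)) N)).sum := by
      rw [shuffles_cons_cons, List.map_append, List.sum_append, shSum_cons_cons]
      simp only [List.map_map, Function.comp_def, mmul_cons]
      rw [List.sum_map_add, List.sum_map_add]
      simp [shSum, List.sum_map_mul_left, List.map_map, Function.comp_def]
      ring
    rw [expand, ih1, ih2]
    simp only [List.length_cons, Finset.sum_range_succ', List.take_succ_cons,
      List.drop_succ_cons, List.take_zero, List.drop_zero, shSum_nil_left, shSum_nil_right,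
      shSum_cons_cons, add_mul, Finset.sum_add_distrib]
    ring

/-- The master identity. -/
lemma master (U A S : List K → K)
    (hUadd : ∀ a b : List K, a ≠ [] → b ≠ [] → U (a ++ b) = U a + U b)
    (hUS : ∀ w : List K, U w * S w = mmul A S w)
    (a b : List K) (ha : a ≠ []) (hb : b ≠ []) :
    (U a + U b) * shSum S a b =
      ∑ i ∈ Finset.range (a.length+1), ∑ j ∈ Finset.range (b.length+1),
        shSum A (a.take i) (b.take j) * shSum S (a.drop i) (b.drop j) := by
  have hUsum : ∀ l : List K, l ≠ [] → U l = (l.map fun z => U [z]).sum := by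
    intro l hl
    induction l with
    | nil => exact absurd rfl hl
    | cons z t ih =>
      cases t with
      | nil => simp
      | cons z' t' =>
        have : U (z :: z' :: t') = U [z] + U (z' :: t') := hUadd [z] (z' :: t') (by simp) (by simp)
        rw [this, ih (by simp)]
        simp
  have hUw : ∀ w ∈ shuffles a b, U w = U a + U b := by
    intro w hw
    have hperm : w.Perm (a ++ b) := perm_of_mem_shuffles hw
    have hwne : w ≠ [] := by
      intro h; subst h
      have := hperm.nil_eq
      rcases List.append_eq_nil_iff.mp this.symm with ⟨h1, _⟩
      exact ha h1
    have h1 : U w = ((a ++ b).map fun z => U [z]).sum := by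
      rw [hUsum w hwne]
      exact List.Perm.sum_eq (hperm.map _)
    have h2 : U (a ++ b) = ((a ++ b).map fun z => U [z]).sum :=
      hUsum _ (by simp [ha])
    rw [h1, ← h2, hUadd a b ha hb]
  rw [← key]
  have heq : ((shuffles a b).map (mmul A S)).sum
      = ((shuffles a b).map (fun w => (U a + U b) * S w)).sum := by
    refine congrArg List.sum (List.map_congr_left ?_)
    intro w hw
    rw [← hUS w, hUw w hw]
  rw [heq, shSum]
  exact (List.sum_map_mul_left (shuffles a b) S (U a + U b)).symm

lemma dir1 (U A S : List K → K)
    (hUadd : ∀ a b : List K, a ≠ [] → b ≠ [] → U (a ++ b) = U a + U b)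
    (hUne : ∀ l : List K, l ≠ [] → U l ≠ 0)
    (hA0 : A [] = 0) (hS0 : S [] = 1)
    (hUS : ∀ w : List K, U w * S w = mmul A S w)
    (halt : ∀ a b : List K, a ≠ [] → b ≠ [] → shSum A a b = 0) :
    ∀ n (a b : List K), a.length + b.length ≤ n → a ≠ [] → b ≠ [] →
      shSum S a b = S a * S b := by
  intro n
  induction n with
  | zero =>
    intro a b hlen ha hb
    have := List.length_pos_iff.mpr ha
    omega
  | succ n ih =>
    intro a b hlen ha hb
    have hS : ∀ c d : List K, c.length + d.length ≤ n → shSum S c d = S c * S d := by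
      intro c d hcd
      rcases eq_or_ne c [] with rfl | hc
      · simp [shSum_nil_left, hS0]
      rcases eq_or_ne d [] with rfl | hd
      · simp [shSum_nil_right, hS0]
      · exact ih c d hcd hc hd
    have ha1 : 1 ≤ a.length := List.length_pos_iff.mpr ha
    have hb1 : 1 ≤ b.length := List.length_pos_iff.mpr hb
    have hm := master U A S hUadd hUS a b ha hb
    have hpt : ∀ i ∈ Finset.range (a.length+1), ∀ j ∈ Finset.range (b.length+1),
        shSum A (a.take i) (b.take j) * shSum S (a.drop i) (b.drop j)
          = (if i = 0 then S a * (A (b.take j) * S (b.drop j)) else 0)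
            + (if j = 0 then S b * (A (a.take i) * S (a.drop i)) else 0) := by
      intro i hi j hj
      rw [Finset.mem_range] at hi hj
      rcases Nat.eq_zero_or_pos i with rfl | hi0
      · rcases Nat.eq_zero_or_pos j with rfl | hj0
        · simp [shSum_nil_left, hA0]
        · have hj0' : j ≠ 0 := by omega
          have hdj : a.length + (b.drop j).length ≤ n := by rw [List.length_drop]; omega
          simp only [List.take_zero, List.drop_zero, shSum_nil_left]
          rw [hS a (b.drop j) hdj]
          simp [hj0']
          try ring
      · rcases Nat.eq_zero_or_pos j with rfl | hj0
        · have hi0' : i ≠ 0 := by omega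
          have hdi : (a.drop i).length + b.length ≤ n := by rw [List.length_drop]; omega
          simp only [List.take_zero, List.drop_zero, shSum_nil_right]
          rw [hS (a.drop i) b hdi]
          simp [hi0']
          try ring
        · have hi0' : i ≠ 0 := by omega
          have hj0' : j ≠ 0 := by omega
          have hti : a.take i ≠ [] := by
            rw [Ne, List.take_eq_nil_iff]; push_neg; exact ⟨hi0', ha⟩
          have htj : b.take j ≠ [] := by
            rw [Ne, List.take_eq_nil_iff]; push_neg; exact ⟨hj0', hb⟩
          rw [halt _ _ hti htj]
          simp [hi0', hj0']
    rw [Finset.sum_congr rfl (fun i hi => Finset.sum_congr rfl (hpt i hi))] at hm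
    simp only [Finset.sum_add_distrib, Finset.sum_ite_irrel, Finset.sum_const_zero,
      Finset.sum_ite_eq', Finset.mem_range, Nat.zero_lt_succ, if_true, ite_true] at hm
    have hXb : ∑ j ∈ Finset.range (b.length+1), S a * (A (b.take j) * S (b.drop j))
        = S a * (U b * S b) := by
      rw [← Finset.mul_sum, hUS b]; rfl
    have hYa : ∑ i ∈ Finset.range (a.length+1), S b * (A (a.take i) * S (a.drop i))
        = S b * (U a * S a) := by
      rw [← Finset.mul_sum, hUS a]; rfl
    rw [hXb, hYa] at hm
    have hne : U a + U b ≠ 0 := by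
      rw [← hUadd a b ha hb]; exact hUne _ (by simp [ha])
    refine mul_left_cancel₀ hne ?_
    rw [hm]; ring

lemma dir2 (U A S : List K → K)
    (hUadd : ∀ a b : List K, a ≠ [] → b ≠ [] → U (a ++ b) = U a + U b)
    (hA0 : A [] = 0) (hS0 : S [] = 1)
    (hUS : ∀ w : List K, U w * S w = mmul A S w)
    (hsym : ∀ a b : List K, a ≠ [] → b ≠ [] → shSum S a b = S a * S b) :
    ∀ n (a b : List K), a.length + b.length ≤ n → a ≠ [] → b ≠ [] →
      shSum A a b = 0 := by
  have hSall : ∀ c d : List K, shSum S c d = S c * S d := by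
    intro c d
    rcases eq_or_ne c [] with rfl | hc
    · simp [shSum_nil_left, hS0]
    rcases eq_or_ne d [] with rfl | hd
    · simp [shSum_nil_right, hS0]
    · exact hsym c d hc hd
  intro n
  induction n with
  | zero =>
    intro a b hlen ha hb
    have := List.length_pos_iff.mpr ha
    omega
  | succ n ih =>
    intro a b hlen ha hb
    have ha1 : 1 ≤ a.length := List.length_pos_iff.mpr ha
    have hb1 : 1 ≤ b.length := List.length_pos_iff.mpr hb
    have hm := master U A S hUadd hUS a b ha hb
    have hpt : ∀ i ∈ Finset.range (a.length+1), ∀ j ∈ Finset.range (b.length+1),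
        shSum A (a.take i) (b.take j) * shSum S (a.drop i) (b.drop j)
          = (if i = 0 then S a * (A (b.take j) * S (b.drop j)) else 0)
            + (if j = 0 then S b * (A (a.take i) * S (a.drop i)) else 0)
            + (if i = a.length then (if j = b.length then shSum A a b else 0) else 0) := by
      intro i hi j hj
      rw [Finset.mem_range] at hi hj
      have hne0a : (0 : ℕ) ≠ a.length := by omega
      have hne0b : (0 : ℕ) ≠ b.length := by omega
      rcases Nat.eq_zero_or_pos i with rfl | hi0
      · rcases Nat.eq_zero_or_pos j with rfl | hj0
        · simp [shSum_nil_left, hA0, if_neg hne0a]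
        · have hj0' : j ≠ 0 := by omega
          simp only [List.take_zero, List.drop_zero, shSum_nil_left]
          rw [hSall a (b.drop j), if_neg hne0a]
          simp [hj0']
          try ring
      · rcases Nat.eq_zero_or_pos j with rfl | hj0
        · have hi0' : i ≠ 0 := by omega
          simp only [List.take_zero, List.drop_zero, shSum_nil_right]
          rw [hSall (a.drop i) b]
          simp [hi0', if_neg hne0b]
          try ring
        · have hi0' : i ≠ 0 := by omega
          have hj0' : j ≠ 0 := by omega
          rcases eq_or_ne i a.length with rfl | hia
          · rcases eq_or_ne j b.length with rfl | hjb
            · rw [List.take_length, List.take_length, List.drop_length, List.drop_length,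
                shSum_nil_left, hS0]
              simp [hi0', hj0']
            · have hti : a.take a.length ≠ [] := by rw [List.take_length]; exact ha
              have htj : b.take j ≠ [] := by
                rw [Ne, List.take_eq_nil_iff]; push_neg; exact ⟨hj0', hb⟩
              have hlt : (a.take a.length).length + (b.take j).length ≤ n := by
                rw [List.length_take, List.length_take]
                have : j ≤ b.length := by omega
                have : j < b.length := by omega
                omega
              rw [ih _ _ hlt hti htj]
              simp [hi0', hj0', hjb]
          · have hti : a.take i ≠ [] := by
              rw [Ne, List.take_eq_nil_iff]; push_neg; exact ⟨hi0', ha⟩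
            have htj : b.take j ≠ [] := by
              rw [Ne, List.take_eq_nil_iff]; push_neg; exact ⟨hj0', hb⟩
            have hlt : (a.take i).length + (b.take j).length ≤ n := by
              rw [List.length_take, List.length_take]
              have : i < a.length := by omega
              omega
            rw [ih _ _ hlt hti htj]
            simp [hi0', hj0', hia]
    rw [Finset.sum_congr rfl (fun i hi => Finset.sum_congr rfl (hpt i hi))] at hm
    simp only [Finset.sum_add_distrib, Finset.sum_ite_irrel, Finset.sum_const_zero,
      Finset.sum_ite_eq', Finset.mem_range, Nat.zero_lt_succ, if_true, ite_true,
      Nat.lt_add_one_iff, le_refl, Nat.zero_le] at hm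
    have hXb : ∑ j ∈ Finset.range (b.length+1), S a * (A (b.take j) * S (b.drop j))
        = S a * (U b * S b) := by
      rw [← Finset.mul_sum, hUS b]; rfl
    have hYa : ∑ i ∈ Finset.range (a.length+1), S b * (A (a.take i) * S (a.drop i))
        = S b * (U a * S a) := by
      rw [← Finset.mul_sum, hUS a]; rfl
    rw [hXb, hYa, hSall a b] at hm
    linear_combination -hm

/-- Cresson's criterion: if `U` is additive and nonvanishing on nonempty words
and `U · S = A × S`, then `A` is alternal iff `S` is symmetral. -/
theorem stmt7 {K : Type*} [Field K] (U A S : List K → K)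
    (hU0 : U [] = 0)
    (hUadd : ∀ a b : List K, a ≠ [] → b ≠ [] → U (a ++ b) = U a + U b)
    (hUne : ∀ l : List K, l ≠ [] → U l ≠ 0)
    (hA0 : A [] = 0) (hS0 : S [] = 1)
    (hUS : ∀ w : List K, U w * S w = mmul A S w) :
    (∀ a b : List K, a ≠ [] → b ≠ [] → shSum A a b = 0) ↔
      (∀ a b : List K, a ≠ [] → b ≠ [] → shSum S a b = S a * S b) := by
  constructor
  · intro halt a b ha hb
    exact dir1 U A S hUadd hUne hA0 hS0 hUS halt (a.length + b.length) a b le_rfl ha hb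
  · intro hsym a b ha hb
    exact dir2 U A S hUadd hA0 hS0 hUS hsym (a.length + b.length) a b le_rfl ha hb
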